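/- Let C be a set of node features. For every d ≥ 0 there exists a single pattern value p_d (depending only on d and the common feature c) such that: for all integers n, m ≥ 3, if C_n and C_m are cycle graphs on n and m vertices respectively in which every vertex carries the same feature c ∈ C, then the d-pattern of every vertex of C_n and the d-pattern of every vertex of C_m both equal p_d. In particular, d-patterns cannot distinguish vertices of featureless cycle graphs of different sizes. -/

import Mathlib

/-- The type of `d`-patterns over a feature set `C`: a `0`-pattern is a raw feature,
and a `(d+1)`-pattern is a pair of a `d`-pattern together with a multiset of
`d`-patterns (the patterns of the neighbors). -/
def Pattern (C : Type) : ℕ → Type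
  | 0 => C
  | (d + 1) => Pattern C d × Multiset (Pattern C d)

/-- The `d`-pattern of a vertex `v` in a featured graph `(G, c)`:
the 0-pattern is the feature `c v`; the `(d+1)`-pattern pairs the `d`-pattern of `v`
with the multiset of `d`-patterns of the neighbors of `v`. -/
noncomputable def dPattern {V C : Type} [Fintype V] (G : SimpleGraph V) (c : V → C) :
    (d : ℕ) → V → Pattern C d
  | 0, v => c v
  | (d + 1), v =>
      letI := Classical.decRel G.Adj
      (dPattern G c d v, (G.neighborFinset v).val.map (dPattern G c d))

open SimpleGraph

theorem dPattern_succ {V C : Type} [Fintype V] (G : SimpleGraph V) [DecidableRel G.Adj]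
    (c : V → C) (d : ℕ) (v : V) :
    dPattern G c (d + 1) v =
      (dPattern G c d v, (G.neighborFinset v).val.map (dPattern G c d)) := by
  rw [dPattern]
  congr
  exact Subsingleton.elim _ _

def regularPattern {C : Type} (c : C) (k : ℕ) : (d : ℕ) → Pattern C d
  | 0 => c
  | d + 1 => (regularPattern c k d, Multiset.replicate k (regularPattern c k d))

theorem dPattern_const_of_isRegularOfDegree {V C : Type} [Fintype V] {G : SimpleGraph V}
    [DecidableRel G.Adj] {k : ℕ} (hG : G.IsRegularOfDegree k) (c : C) (d : ℕ) (v : V) :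
    dPattern G (fun _ => c) d v = regularPattern c k d := by
  induction d generalizing v with
  | zero => rfl
  | succ d ih =>
    rw [dPattern_succ, funext ih, Multiset.map_const', Finset.card_val,
      card_neighborFinset_eq_degree, hG v]
    rfl

theorem cycleGraph_isRegularOfDegree_two {n : ℕ} (hn : 3 ≤ n) :
    (cycleGraph n).IsRegularOfDegree 2 := by
  obtain ⟨n, rfl⟩ := Nat.exists_eq_add_of_le' hn
  exact fun _ => cycleGraph_degree_three_le

/-- For every `d ≥ 0` there is a single pattern value `p_d`
(depending only on `d` and the common feature `c`) such that for all `n, m ≥ 3`,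
every vertex of the cycle graph `C_n` and every vertex of the cycle graph `C_m`
(all vertices carrying the same feature `c`) has `d`-pattern equal to `p_d`:
d-patterns cannot distinguish vertices of featureless cycle graphs of different sizes. -/
theorem dPattern_cycleGraph_const (C : Type) (c : C) :
    ∀ d : ℕ, ∃ p : Pattern C d,
      ∀ n m : ℕ, 3 ≤ n → 3 ≤ m →
        (∀ v : Fin n, dPattern (SimpleGraph.cycleGraph n) (fun _ => c) d v = p) ∧
        (∀ w : Fin m, dPattern (SimpleGraph.cycleGraph m) (fun _ => c) d w = p) := by
  intro d
  refine ⟨regularPattern c 2 d, fun n m hn hm => ⟨fun v => ?_, fun w => ?_⟩⟩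
  · exact dPattern_const_of_isRegularOfDegree (cycleGraph_isRegularOfDegree_two hn) c d v
  · exact dPattern_const_of_isRegularOfDegree (cycleGraph_isRegularOfDegree_two hm) c d w
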